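/- Let ℓ ≥ 2. The group with presentation ⟨x, y, z | x² = z^{2^{ℓ-1}}, y² = 1, z^{2^ℓ} = 1, [y,x] = z, [z,x] = z^{-2}, [z,y] = z^{-2}⟩ is isomorphic to the semidihedral group S_{2^{ℓ+2}} = ⟨a, b | a² = 1, b^{2^{ℓ+1}} = 1, b^a = b^{2^ℓ - 1}⟩ of order 2^{ℓ+2}. -/
import Mathlib


section
variable {G : Type*} [Group G]

lemma zpow_cancel {B : G} {N : ℤ} (hB : B ^ N = 1) {a b k : ℤ} (h : a = b + N * k) :
    B ^ a = B ^ b := by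
  rw [h, zpow_add, zpow_mul, hB, one_zpow, mul_one]

lemma conj_zpow'' {X Z : G} (t : ℤ) : X⁻¹ * Z ^ t * X = (X⁻¹ * Z * X) ^ t := by
  have := conj_zpow (i := t) (a := X⁻¹) (b := Z)
  simpa using this.symm

lemma lemA (n : ℕ) (X Y Z : G)
    (h1 : X ^ 2 = Z ^ ((2:ℤ) ^ (n+1)))
    (h2 : Y ^ 2 = 1)
    (h3 : Z ^ ((2:ℤ) ^ (n+2)) = 1)
    (h4 : Y⁻¹ * X⁻¹ * Y * X = Z)
    (h5 : X⁻¹ * Z * X = Z⁻¹)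
    (h6 : Y⁻¹ * Z * Y = Z⁻¹) :
    (X*Y) ^ ((2:ℤ) ^ (n+3)) = 1 ∧ Y⁻¹ * (X*Y) * Y = (X*Y) ^ ((2:ℤ) ^ (n+2) - 1) ∧
      (X*Y) ^ ((2:ℤ) ^ (n+2) - 2) = Z := by
  have hYY : Y * Y = 1 := by rw [← pow_two, h2]
  have hY : Y⁻¹ = Y := by rw [inv_eq_iff_mul_eq_one, hYY]
  have hYX : Y * X = X * Y * Z := by rw [← h4]; group
  set m : ℤ := 2 ^ (n+1) - 1 with hm
  have hsq : (X*Y) ^ (2:ℤ) = Z ^ m := by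
    have e1 : (X*Y) ^ (2:ℤ) = X * (Y * X) * Y := by
      rw [zpow_two]; group
    rw [e1, hYX]
    have e2 : X * (X * Y * Z) * Y = X ^ 2 * (Y⁻¹ * Z * Y) := by
      rw [hY, pow_two]; group
    rw [e2, h6, h1, hm, sub_eq_add_neg, zpow_add, zpow_neg_one]
  have hsqt : ∀ t : ℤ, (X*Y) ^ (2 * t) = Z ^ (m * t) := by
    intro t
    rw [zpow_mul, zpow_mul, hsq]
  have key : (X*Y) ^ ((2:ℤ) ^ (n+2) - 2) = Z := by
    have h22 : (2:ℤ) ^ (n+2) - 2 = 2 * m := by rw [hm]; ring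
    rw [h22, hsqt]
    have e : m * m = 1 + 2 ^ (n+2) * (2 ^ n - 1) := by rw [hm]; ring
    rw [zpow_cancel h3 e, zpow_one]
  refine ⟨?_, ?_, key⟩
  · have h23 : (2:ℤ) ^ (n+3) = 2 * 2 ^ (n+2) := by ring
    rw [h23, hsqt]
    have e : m * 2 ^ (n+2) = 0 + 2 ^ (n+2) * m := by ring
    rw [zpow_cancel h3 e, zpow_zero]
  · have hXZ : Z * X = X * Z⁻¹ := by rw [← h5]; group
    have h6' : Y * Z * Y = Z⁻¹ := by rw [← h6, hY]
    have hYZ : Y * Z = Z⁻¹ * Y := by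
      calc Y * Z = (Y * Z * Y) * Y := by rw [mul_assoc (Y*Z) Y Y, hYY, mul_one]
        _ = Z⁻¹ * Y := by rw [h6']
    have hcomm : Z * (X * Y) = X * Y * Z := by
      calc Z * (X * Y) = (Z * X) * Y := by rw [mul_assoc]
        _ = (X * Z⁻¹) * Y := by rw [hXZ]
        _ = X * (Z⁻¹ * Y) := by rw [mul_assoc]
        _ = X * (Y * Z) := by rw [hYZ]
        _ = X * Y * Z := by rw [mul_assoc]
    have e : (2:ℤ) ^ (n+2) - 1 = ((2:ℤ) ^ (n+2) - 2) + 1 := by ring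
    rw [e, zpow_add, key, zpow_one, hcomm, hY]
    calc Y * (X * Y) * Y = (Y * X) * (Y * Y) := by group
      _ = Y * X := by rw [hYY, mul_one]
      _ = X * Y * Z := hYX

lemma lemB (n : ℕ) (A B : G)
    (hA : A ^ 2 = 1)
    (hB : B ^ ((2:ℤ) ^ (n+3)) = 1)
    (hc : A⁻¹ * B * A = B ^ ((2:ℤ) ^ (n+2) - 1)) :
    (B*A) ^ 2 = (B ^ ((2:ℤ) ^ (n+2) - 2)) ^ ((2:ℤ) ^ (n+1)) ∧
    (B ^ ((2:ℤ) ^ (n+2) - 2)) ^ ((2:ℤ) ^ (n+2)) = 1 ∧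
    A⁻¹ * (B*A)⁻¹ * A * (B*A) = B ^ ((2:ℤ) ^ (n+2) - 2) ∧
    (B ^ ((2:ℤ) ^ (n+2) - 2))⁻¹ * (B*A)⁻¹ * (B ^ ((2:ℤ) ^ (n+2) - 2)) * (B*A)
      * (B ^ ((2:ℤ) ^ (n+2) - 2)) ^ 2 = 1 ∧
    (B ^ ((2:ℤ) ^ (n+2) - 2))⁻¹ * A⁻¹ * (B ^ ((2:ℤ) ^ (n+2) - 2)) * A
      * (B ^ ((2:ℤ) ^ (n+2) - 2)) ^ 2 = 1 := by
  have hAA : A * A = 1 := by rw [← pow_two, hA]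
  have hA' : A⁻¹ = A := by rw [inv_eq_iff_mul_eq_one, hAA]
  set r : ℤ := 2 ^ (n+2) - 1 with hr
  set k : ℤ := 2 ^ (n+2) - 2 with hk
  have hconj : ∀ t : ℤ, A⁻¹ * B ^ t * A = B ^ (t * r) := by
    intro t
    rw [conj_zpow'', hc, ← zpow_mul, mul_comm]
  have c3 : (B ^ k) ^ ((2:ℤ) ^ (n+2)) = 1 := by
    rw [← zpow_mul]
    have e : k * 2 ^ (n+2) = 0 + 2 ^ (n+3) * (2 ^ (n+1) - 1) := by rw [hk]; ring
    rw [zpow_cancel hB e, zpow_zero]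
  have sq2 : ∀ (t : ℤ), (B ^ t) ^ 2 = B ^ (t * 2) := by
    intro t; rw [pow_two, ← zpow_add]; ring_nf
  refine ⟨?_, c3, ?_, ?_, ?_⟩
  · have e1 : (B*A) ^ 2 = B * (A⁻¹ * B * A) := by rw [hA', pow_two]; group
    have e2 : B * B ^ r = B ^ (1 + r) := by rw [zpow_add, zpow_one]
    rw [e1, hc, e2, ← zpow_mul]
    exact zpow_cancel hB (show (1:ℤ) + r = k * 2 ^ (n+1) + 2 ^ (n+3) * (1 - 2 ^ n) by
      rw [hr, hk]; ring)
  · have e1 : A⁻¹ * (B*A)⁻¹ * A * (B*A) = B⁻¹ * (A⁻¹ * B * A) := by rw [hA']; group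
    rw [e1, hc, ← zpow_neg_one, ← zpow_add]
    congr 1
    rw [hr, hk]; ring
  · calc (B ^ k)⁻¹ * (B*A)⁻¹ * (B ^ k) * (B*A) * (B ^ k) ^ 2
        = (B ^ k)⁻¹ * (A⁻¹ * B ^ k * A) * (B ^ k) ^ 2 := by group
      _ = B ^ (-k) * B ^ (k * r) * B ^ (k * 2) := by rw [hconj, zpow_neg, sq2]
      _ = B ^ (-k + k * r + k * 2) := by rw [← zpow_add, ← zpow_add]
      _ = 1 := by
          have e : -k + k * r + k * 2 = 0 + 2 ^ (n+3) * (2 ^ (n+1) - 1) := by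
            rw [hr, hk]; ring
          rw [zpow_cancel hB e, zpow_zero]
  · calc (B ^ k)⁻¹ * A⁻¹ * (B ^ k) * A * (B ^ k) ^ 2
        = (B ^ k)⁻¹ * (A⁻¹ * B ^ k * A) * (B ^ k) ^ 2 := by group
      _ = B ^ (-k) * B ^ (k * r) * B ^ (k * 2) := by rw [hconj, zpow_neg, sq2]
      _ = B ^ (-k + k * r + k * 2) := by rw [← zpow_add, ← zpow_add]
      _ = 1 := by
          have e : -k + k * r + k * 2 = 0 + 2 ^ (n+3) * (2 ^ (n+1) - 1) := by
            rw [hr, hk]; ring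
          rw [zpow_cancel hB e, zpow_zero]

end

section
variable {G : Type*} [Group G]

lemma rel_eq_one {α : Type*} {rels : Set (FreeGroup α)} {r : FreeGroup α} (h : r ∈ rels) :
    PresentedGroup.mk rels r = 1 :=
  (QuotientGroup.eq_one_iff r).mpr (Subgroup.subset_normalClosure h)

lemma pow2_cast (g : G) (s : ℕ) : g ^ ((2:ℤ) ^ s) = g ^ (2 ^ s : ℕ) := by
  rw [← zpow_natCast]; norm_cast

lemma cancel5 {X Z : G} (h : Z⁻¹ * X⁻¹ * Z * X * Z ^ 2 = 1) : X⁻¹ * Z * X = Z⁻¹ := by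
  rw [pow_two] at h
  calc X⁻¹ * Z * X = Z * (Z⁻¹ * X⁻¹ * Z * X * (Z * Z)) * (Z⁻¹ * Z⁻¹) := by group
    _ = Z⁻¹ := by rw [h]; group

lemma hcast (n : ℕ) : ((2 ^ (n+2) - 1 : ℕ) : ℤ) = (2:ℤ) ^ (n+2) - 1 := by
  have h1 : (1:ℕ) ≤ 2 ^ (n+2) := Nat.one_le_two_pow
  push_cast [h1]
  ring

end


open FreeGroup in
/-- Relators of G_⚄(1,1,ℓ) = ⟨x,y,z | x² = z^{2^{ℓ-1}}, y² = 1, z^{2^ℓ} = 1, [y,x] = z,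
[z,x] = z⁻², [z,y] = z⁻²⟩ (convention [y,x] = y⁻¹x⁻¹yx; generators 0 ↦ x, 1 ↦ y, 2 ↦ z). -/
def relsG5 (ℓ : ℕ) : Set (FreeGroup (Fin 3)) :=
  { (of 0) ^ 2 * ((of 2) ^ (2 ^ (ℓ - 1)))⁻¹,
    (of 1) ^ 2,
    (of 2) ^ (2 ^ ℓ),
    (of 1)⁻¹ * (of 0)⁻¹ * of 1 * of 0 * (of 2)⁻¹,
    (of 2)⁻¹ * (of 0)⁻¹ * of 2 * of 0 * (of 2) ^ 2,
    (of 2)⁻¹ * (of 1)⁻¹ * of 2 * of 1 * (of 2) ^ 2 }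

abbrev G5 (ℓ : ℕ) := PresentedGroup (relsG5 ℓ)

open FreeGroup in
/-- Relators of the semidihedral group
S_{2^{ℓ+2}} = ⟨a, b | a² = 1, b^{2^{ℓ+1}} = 1, b^a = b^{2^ℓ - 1}⟩
(with b^a = a⁻¹ba; generators 0 ↦ a, 1 ↦ b). -/
def relsSD (ℓ : ℕ) : Set (FreeGroup (Fin 2)) :=
  { (of 0) ^ 2,
    (of 1) ^ (2 ^ (ℓ + 1)),
    (of 0)⁻¹ * of 1 * of 0 * ((of 1) ^ (2 ^ ℓ - 1))⁻¹ }

abbrev SD (ℓ : ℕ) := PresentedGroup (relsSD ℓ)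

/-- For ℓ ≥ 2, the group G_⚄(1,1,ℓ) is isomorphic to the semidihedral group
S_{2^{ℓ+2}} via a ↦ y, b ↦ xy. -/
theorem stmt15 (ℓ : ℕ) (hℓ : 2 ≤ ℓ) :
    ∃ φ : SD ℓ ≃* G5 ℓ,
      φ (PresentedGroup.of 0) = PresentedGroup.of 1 ∧
      φ (PresentedGroup.of 1) = PresentedGroup.of 0 * PresentedGroup.of 1 := by
  obtain ⟨n, rfl⟩ : ∃ n, ℓ = n + 2 := ⟨ℓ - 2, by omega⟩
  clear hℓ
  -- generators of G5
  set X : G5 (n+2) := PresentedGroup.of 0 with hX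
  set Y : G5 (n+2) := PresentedGroup.of 1 with hYdef
  set Z : G5 (n+2) := PresentedGroup.of 2 with hZ
  -- relations in G5
  have r1 := rel_eq_one (rels := relsG5 (n+2))
    (r := (FreeGroup.of 0) ^ 2 * ((FreeGroup.of 2) ^ (2 ^ (n+2-1)))⁻¹) (by simp [relsG5])
  have r2 := rel_eq_one (rels := relsG5 (n+2)) (r := (FreeGroup.of 1) ^ 2) (by simp [relsG5])
  have r3 := rel_eq_one (rels := relsG5 (n+2)) (r := (FreeGroup.of 2) ^ (2 ^ (n+2)))
    (by simp [relsG5])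
  have r4 := rel_eq_one (rels := relsG5 (n+2))
    (r := (FreeGroup.of 1)⁻¹ * (FreeGroup.of 0)⁻¹ * FreeGroup.of 1 * FreeGroup.of 0 *
      (FreeGroup.of 2)⁻¹) (by simp [relsG5])
  have r5 := rel_eq_one (rels := relsG5 (n+2))
    (r := (FreeGroup.of 2)⁻¹ * (FreeGroup.of 0)⁻¹ * FreeGroup.of 2 * FreeGroup.of 0 *
      (FreeGroup.of 2) ^ 2) (by simp [relsG5])
  have r6 := rel_eq_one (rels := relsG5 (n+2))
    (r := (FreeGroup.of 2)⁻¹ * (FreeGroup.of 1)⁻¹ * FreeGroup.of 2 * FreeGroup.of 1 *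
      (FreeGroup.of 2) ^ 2) (by simp [relsG5])
  simp only [map_mul, map_pow, map_inv] at r1 r2 r3 r4 r5 r6
  rw [show (n+2-1 : ℕ) = n+1 from rfl] at r1
  change X ^ 2 * (Z ^ 2 ^ (n+1))⁻¹ = 1 at r1
  change Y ^ 2 = 1 at r2
  change Z ^ 2 ^ (n+2) = 1 at r3
  change Y⁻¹ * X⁻¹ * Y * X * Z⁻¹ = 1 at r4
  change Z⁻¹ * X⁻¹ * Z * X * Z ^ 2 = 1 at r5
  change Z⁻¹ * Y⁻¹ * Z * Y * Z ^ 2 = 1 at r6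
  have h1 : X ^ 2 = Z ^ ((2:ℤ) ^ (n+1)) := by
    rw [pow2_cast]; exact mul_inv_eq_one.mp r1
  have h3 : Z ^ ((2:ℤ) ^ (n+2)) = 1 := by rw [pow2_cast]; exact r3
  have h4 : Y⁻¹ * X⁻¹ * Y * X = Z := by
    have := mul_inv_eq_one.mp r4; simpa using this
  have h5 : X⁻¹ * Z * X = Z⁻¹ := cancel5 r5
  have h6 : Y⁻¹ * Z * Y = Z⁻¹ := cancel5 r6
  obtain ⟨a1, a2, a3⟩ := lemA n X Y Z h1 r2 h3 h4 h5 h6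
  -- generators of SD
  set A : SD (n+2) := PresentedGroup.of 0 with hA
  set B : SD (n+2) := PresentedGroup.of 1 with hB
  have s1 := rel_eq_one (rels := relsSD (n+2)) (r := (FreeGroup.of 0) ^ 2) (by simp [relsSD])
  have s2 := rel_eq_one (rels := relsSD (n+2)) (r := (FreeGroup.of 1) ^ (2 ^ (n+2+1)))
    (by simp [relsSD])
  have s3 := rel_eq_one (rels := relsSD (n+2))
    (r := (FreeGroup.of 0)⁻¹ * FreeGroup.of 1 * FreeGroup.of 0 *
      ((FreeGroup.of 1) ^ (2 ^ (n+2) - 1))⁻¹) (by simp [relsSD])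
  simp only [map_mul, map_pow, map_inv] at s1 s2 s3
  change A ^ 2 = 1 at s1
  change B ^ 2 ^ (n+2+1) = 1 at s2
  change A⁻¹ * B * A * (B ^ (2 ^ (n+2) - 1))⁻¹ = 1 at s3
  have hs2 : B ^ ((2:ℤ) ^ (n+3)) = 1 := by rw [pow2_cast]; exact s2
  have hs3 : A⁻¹ * B * A = B ^ ((2:ℤ) ^ (n+2) - 1) := by
    rw [← hcast n, zpow_natCast]
    exact mul_inv_eq_one.mp s3
  obtain ⟨b1, b2, b3, b4, b5⟩ := lemB n A B s1 hs2 hs3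
  have hYY : Y * Y = 1 := by rw [← pow_two, r2]
  have hAA : A * A = 1 := by rw [← pow_two, s1]
  -- the forward map SD → G5
  set fφ : Fin 2 → G5 (n+2) := ![Y, X * Y] with hfφ
  have hφrel : ∀ r ∈ relsSD (n+2), FreeGroup.lift fφ r = 1 := by
    intro r hr
    simp only [relsSD, Set.mem_insert_iff, Set.mem_singleton_iff] at hr
    rcases hr with rfl | rfl | rfl
    · simp only [map_pow, FreeGroup.lift_apply_of, hfφ, Matrix.cons_val_zero]
      exact r2
    · simp only [map_pow, FreeGroup.lift_apply_of, hfφ, Matrix.cons_val_one, Matrix.head_cons]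
      exact (pow2_cast (X*Y) (n+3)).symm.trans a1
    · simp only [map_mul, map_pow, map_inv, FreeGroup.lift_apply_of, hfφ, Matrix.cons_val_zero,
        Matrix.cons_val_one, Matrix.head_cons]
      refine mul_inv_eq_one.mpr ?_
      refine a2.trans ?_
      rw [← hcast n, zpow_natCast]
  set fψ : Fin 3 → SD (n+2) := ![B * A, A, B ^ ((2:ℤ) ^ (n+2) - 2)] with hfψ
  have hψrel : ∀ r ∈ relsG5 (n+2), FreeGroup.lift fψ r = 1 := by
    intro r hr
    simp only [relsG5, Set.mem_insert_iff, Set.mem_singleton_iff] at hr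
    rcases hr with rfl | rfl | rfl | rfl | rfl | rfl
    · simp only [map_mul, map_pow, map_inv, FreeGroup.lift_apply_of, hfψ, Matrix.cons_val_zero,
        Matrix.cons_val_two, Matrix.tail_cons, Matrix.head_cons]
      refine mul_inv_eq_one.mpr ?_
      rw [show (n+2-1 : ℕ) = n+1 from rfl]
      exact b1.trans (pow2_cast _ (n+1))
    · simp only [map_pow, FreeGroup.lift_apply_of, hfψ, Matrix.cons_val_one, Matrix.head_cons]
      exact s1
    · simp only [map_pow, FreeGroup.lift_apply_of, hfψ, Matrix.cons_val_two, Matrix.tail_cons,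
        Matrix.head_cons]
      exact (pow2_cast _ (n+2)).symm.trans b2
    · simp only [map_mul, map_inv, FreeGroup.lift_apply_of, hfψ, Matrix.cons_val_zero,
        Matrix.cons_val_one, Matrix.cons_val_two, Matrix.tail_cons, Matrix.head_cons]
      exact mul_inv_eq_one.mpr b3
    · simp only [map_mul, map_pow, map_inv, FreeGroup.lift_apply_of, hfψ, Matrix.cons_val_zero,
        Matrix.cons_val_two, Matrix.tail_cons, Matrix.head_cons]
      exact b4
    · simp only [map_mul, map_pow, map_inv, FreeGroup.lift_apply_of, hfψ, Matrix.cons_val_one,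
        Matrix.cons_val_two, Matrix.tail_cons, Matrix.head_cons]
      exact b5
  set φ : SD (n+2) →* G5 (n+2) := PresentedGroup.toGroup hφrel with hφdef
  set ψ : G5 (n+2) →* SD (n+2) := PresentedGroup.toGroup hψrel with hψdef
  have hφ0 : φ (PresentedGroup.of 0) = Y := by
    rw [hφdef, PresentedGroup.toGroup.of, hfφ]; simp
  have hφ1 : φ (PresentedGroup.of 1) = X * Y := by
    rw [hφdef, PresentedGroup.toGroup.of, hfφ]; simp
  have hψ0 : ψ (PresentedGroup.of 0) = B * A := by
    rw [hψdef, PresentedGroup.toGroup.of, hfψ]; simp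
  have hψ1 : ψ (PresentedGroup.of 1) = A := by
    rw [hψdef, PresentedGroup.toGroup.of, hfψ]; simp
  have hψ2 : ψ (PresentedGroup.of 2) = B ^ ((2:ℤ) ^ (n+2) - 2) := by
    rw [hψdef, PresentedGroup.toGroup.of, hfψ]
    simp [Matrix.cons_val_two, Matrix.tail_cons, Matrix.head_cons]
  have c1 : ∀ s : SD (n+2), ψ (φ s) = s := by
    have hco : ψ.comp φ = MonoidHom.id _ := by
      apply PresentedGroup.ext
      intro x
      fin_cases x
      · show ψ (φ (PresentedGroup.of 0)) = PresentedGroup.of 0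
        rw [hφ0, hYdef, hψ1, hA]
      · show ψ (φ (PresentedGroup.of 1)) = PresentedGroup.of 1
        rw [hφ1, hX, hYdef, map_mul, hψ0, hψ1, mul_assoc, hAA, mul_one, hB]
    intro s
    exact DFunLike.congr_fun hco s
  have c2 : ∀ g : G5 (n+2), φ (ψ g) = g := by
    have hco : φ.comp ψ = MonoidHom.id _ := by
      apply PresentedGroup.ext
      intro x
      fin_cases x
      · show φ (ψ (PresentedGroup.of 0)) = PresentedGroup.of 0
        rw [hψ0, hB, hA, map_mul, hφ1, hφ0, mul_assoc, hYY, mul_one, hX]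
      · show φ (ψ (PresentedGroup.of 1)) = PresentedGroup.of 1
        rw [hψ1, hA, hφ0, hYdef]
      · show φ (ψ (PresentedGroup.of 2)) = PresentedGroup.of 2
        rw [hψ2, hB, map_zpow, hφ1, a3, hZ]
    intro g
    exact DFunLike.congr_fun hco g
  refine ⟨⟨⟨⇑φ, ⇑ψ, c1, c2⟩, map_mul φ⟩, ?_, ?_⟩
  · show φ (PresentedGroup.of 0) = PresentedGroup.of 1
    rw [hφ0, hYdef]
  · show φ (PresentedGroup.of 1) = PresentedGroup.of 0 * PresentedGroup.of 1
    rw [hφ1, hX, hYdef]
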